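/- For an integer k, let I_k(2) = Σ_{m=0}^{∞} 1/(m! · (m+|k|)!). Let P_n be the path graph with vertices 1, …, n and adjacency matrix A_n, and for vertices p, q let cos θ_{pq}(P_n) = (e^{A_n})_{pq} / √((e^{A_n})_{pp} (e^{A_n})_{qq}). Then for every fixed pair of positive integers p, q with p ≠ q, lim_{n→∞} cos θ_{pq}(P_n) = (I_{p−q}(2) − I_{p+q}(2)) / √( (I_0(2) − I_{2p}(2)) · (I_0(2) − I_{2q}(2)) ). -/

import Mathlib

/-!
The entry `(e^{A_n})_{pq}` is `∑ₘ (A_nᵐ)_{pq} / m!`, and `(A_nᵐ)_{pq}` counts walks of length `m`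
from `p` to `q`. Once `n > p + m` such walks never feel the far end of the path, so they are walks
on the half-line `{1, 2, …}`, and by the reflection principle their number is the number of walks
on `ℤ` with displacement `p - q` minus the number with displacement `p + q`. The exponential
generating function at `1` of walks on `ℤ` with displacement `d` is `I_d(2)`, and since every entry
of `A_nᵐ` is at most `2ᵐ`, dominated convergence gives `G_{pq}(P_n) → I_{p-q}(2) - I_{p+q}(2)`.
The diagonal limits `I_0(2) - I_{2p}(2)` are positive, so the quotient converges.
-/

open Matrix Filter Topology

/-- The modified Bessel function of the first kind evaluated at `2`:
`I_k(2) = Σ_{m=0}^{∞} 1/(m! (m+|k|)!)`. -/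
noncomputable def besselI2 (k : ℤ) : ℝ :=
  ∑' m : ℕ, 1 / ((Nat.factorial m : ℝ) * (Nat.factorial (m + k.natAbs) : ℝ))

/-- The adjacency matrix of the path graph `P_n`: the vertex `p ∈ {1, …, n}` is represented
by the index `p - 1 : Fin n`, and vertices are adjacent iff they are consecutive. -/
def pathAdj (n : ℕ) : Matrix (Fin n) (Fin n) ℝ :=
  Matrix.of fun p q => if p.1 + 1 = q.1 ∨ q.1 + 1 = p.1 then 1 else 0

/-- The communicability `G_{pq} = (e^{A_n})_{pq}` of the path graph `P_n` between vertices
`p, q ∈ {1, …, n}` (junk value `0` if `p` or `q` is not a vertex of `P_n`). -/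
noncomputable def pathComm (n p q : ℕ) : ℝ :=
  if hp : p - 1 < n then
    if hq : q - 1 < n then NormedSpace.exp (pathAdj n) ⟨p - 1, hp⟩ ⟨q - 1, hq⟩ else 0
  else 0

/-- The cosine of the communicability angle `cos θ_{pq}(P_n) = G_{pq}/√(G_{pp} G_{qq})`
of the path graph `P_n`. -/
noncomputable def pathCos (n p q : ℕ) : ℝ :=
  pathComm n p q / Real.sqrt (pathComm n p p * pathComm n q q)

/-- The number of walks of length `m` on `ℤ` with displacement `d`: such a walk makes
`(m + |d|) / 2` steps in the direction of `d`. -/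
def lineWalks (m : ℕ) (d : ℤ) : ℕ :=
  if (m + d.natAbs) % 2 = 0 then m.choose ((m + d.natAbs) / 2) else 0

lemma lineWalks_neg (m : ℕ) (d : ℤ) : lineWalks m (-d) = lineWalks m d := by
  simp only [lineWalks, Int.natAbs_neg]

lemma lineWalks_zero (d : ℤ) : lineWalks 0 d = if d = 0 then 1 else 0 := by
  unfold lineWalks
  split_ifs with h₁ h₂ h₂
  · subst h₂; rfl
  · exact Nat.choose_eq_zero_of_lt (by omega)
  · omega
  · rfl

lemma lineWalks_succ_natCast_succ (m j : ℕ) :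
    lineWalks (m + 1) (j + 1 : ℕ) = lineWalks m j + lineWalks m (j + 2 : ℕ) := by
  simp only [lineWalks, Int.natAbs_natCast]
  rcases Nat.even_or_odd (m + j) with ⟨s, hs⟩ | ⟨s, hs⟩
  · rw [if_pos (by omega), if_pos (by omega), if_pos (by omega),
      show (m + 1 + (j + 1)) / 2 = s + 1 by omega, show (m + j) / 2 = s by omega,
      show (m + (j + 2)) / 2 = s + 1 by omega, Nat.choose_succ_succ]
  · rw [if_neg (by omega), if_neg (by omega), if_neg (by omega)]

lemma lineWalks_succ_zero (m : ℕ) : lineWalks (m + 1) 0 = 2 * lineWalks m 1 := by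
  simp only [lineWalks, Int.natAbs_zero, Int.natAbs_one, add_zero]
  rcases Nat.even_or_odd m with ⟨s, hs⟩ | ⟨s, hs⟩
  · rw [if_neg (by omega), if_neg (by omega)]
  · subst hs
    rw [if_pos (by omega), if_pos (by omega), show (2 * s + 1 + 1) / 2 = s + 1 by omega,
      Nat.choose_succ_succ, ← Nat.choose_symm_half]
    ring

theorem lineWalks_succ (m : ℕ) (d : ℤ) :
    lineWalks (m + 1) d = lineWalks m (d - 1) + lineWalks m (d + 1) := by
  have hnat (j : ℕ) : lineWalks (m + 1) j = lineWalks m (j - 1) + lineWalks m (j + 1) := by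
    cases j with
    | zero => rw [Nat.cast_zero, lineWalks_succ_zero, zero_sub, zero_add, lineWalks_neg, two_mul]
    | succ j => convert lineWalks_succ_natCast_succ m j using 3 <;> push_cast <;> ring
  obtain ⟨j, rfl | rfl⟩ := Int.eq_nat_or_neg d
  · exact hnat j
  · rw [lineWalks_neg, hnat, add_comm, ← lineWalks_neg m (-j - 1), ← lineWalks_neg m (-j + 1)]
    congr 2 <;> ring

def halfLineWalks : ℕ → ℕ → ℕ → ℕ
  | 0, a, b => if a = b then 1 else 0
  | m + 1, 0, b => halfLineWalks m 1 b
  | m + 1, a + 1, b => halfLineWalks m a b + halfLineWalks m (a + 2) b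

/-- Reflection principle: reflecting a walk on `ℤ` from `a` to `b` after its first visit to `-1`
matches the walks that visit `-1` with all walks from `a` to `-b - 2`. -/
theorem halfLineWalks_add_lineWalks (m a b : ℕ) :
    halfLineWalks m a b + lineWalks m (a + b + 2) = lineWalks m (a - b) := by
  induction m generalizing a with
  | zero =>
    simp only [halfLineWalks, lineWalks_zero]
    split_ifs <;> omega
  | succ m ih =>
    cases a with
    | zero =>
      have h := ih 1
      rw [halfLineWalks, lineWalks_succ, lineWalks_succ, ← lineWalks_neg m (_ - 1)]
      push_cast at h ⊢
      ring_nf at h ⊢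
      omega
    | succ a =>
      have h₀ := ih a
      have h₂ := ih (a + 2)
      rw [halfLineWalks, lineWalks_succ, lineWalks_succ]
      push_cast at h₀ h₂ ⊢
      ring_nf at h₀ h₂ ⊢
      omega

lemma Fin.sum_ite_val_eq {M : Type*} [AddCommMonoid M] {n : ℕ} (k : ℕ) (f : Fin n → M) :
    ∑ r : Fin n, (if r.1 = k then f r else 0) = if h : k < n then f ⟨k, h⟩ else 0 := by
  split_ifs with h
  · simp [← Fin.ext_iff (b := ⟨k, h⟩)]
  · exact Finset.sum_eq_zero fun r _ => if_neg (by omega)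

lemma pathAdj_mul_apply {n : ℕ} (M : Matrix (Fin n) (Fin n) ℝ) (a b : Fin n) :
    (pathAdj n * M) a b =
      (if h : a.1 + 1 < n then M ⟨a.1 + 1, h⟩ b else 0) +
        (if h : 0 < a.1 then M ⟨a.1 - 1, by omega⟩ b else 0) := by
  have hrow : ∀ r : Fin n, pathAdj n a r * M r b =
      (if r.1 = a.1 + 1 then M r b else 0) +
        (if 0 < a.1 then if r.1 = a.1 - 1 then M r b else 0 else 0) := by
    intro r
    simp only [pathAdj, of_apply]
    split_ifs <;> first | omega | simp
  simp only [mul_apply, hrow, Finset.sum_add_distrib, Fin.sum_ite_val_eq]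
  congr 1
  split_ifs with ha
  · rw [Fin.sum_ite_val_eq, dif_pos (by omega)]
  · simp

lemma pathAdj_pow_apply_nonneg_le {n : ℕ} (m : ℕ) (a b : Fin n) :
    0 ≤ (pathAdj n ^ m) a b ∧ (pathAdj n ^ m) a b ≤ 2 ^ m := by
  induction m generalizing a with
  | zero =>
    rw [pow_zero, one_apply]
    split_ifs <;> norm_num
  | succ m ih =>
    rw [pow_succ', pathAdj_mul_apply, pow_succ, mul_two]
    have h₀ : (0 : ℝ) ≤ 2 ^ m := by positivity
    constructor
    · apply add_nonneg <;> split_ifs <;> simp [(ih _).1]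
    · apply add_le_add <;> split_ifs <;> simp [(ih _).2, h₀]

theorem pathAdj_pow_apply_eq_halfLineWalks {n m : ℕ} (a b : Fin n) (h : a.1 + m < n) :
    (pathAdj n ^ m) a b = halfLineWalks m a b := by
  induction m generalizing a with
  | zero =>
    simp [one_apply, halfLineWalks, Fin.ext_iff]
  | succ m ih =>
    obtain ⟨a, ha⟩ := a
    simp only at h
    rw [pow_succ', pathAdj_mul_apply, dif_pos (show a + 1 < n by omega), ih _ (by simp; omega)]
    cases a with
    | zero => simp [halfLineWalks]
    | succ a =>
      rw [dif_pos (by simp), ih _ (by simp; omega)]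
      simp only [halfLineWalks, Nat.add_sub_cancel, Nat.cast_add]
      ring

theorem Matrix.hasSum_exp_apply {ι : Type*} [Fintype ι] [DecidableEq ι]
    (A : Matrix ι ι ℝ) (i j : ι) :
    HasSum (fun m : ℕ => (A ^ m) i j / m.factorial) (NormedSpace.exp A i j) := by
  -- `NormedSpace.exp` does not depend on the norm; any submultiplicative one will do.
  let : NormedRing (Matrix ι ι ℝ) := Matrix.linftyOpNormedRing
  let : NormedAlgebra ℝ (Matrix ι ι ℝ) := Matrix.linftyOpNormedAlgebra
  have h := Pi.hasSum.mp (Pi.hasSum.mp (NormedSpace.exp_series_hasSum_exp' (𝕂 := ℝ) A) i) j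
  simp only [smul_apply, smul_eq_mul, ← div_eq_inv_mul] at h
  exact h

theorem hasSum_besselI2 (k : ℤ) :
    HasSum (fun m : ℕ => 1 / ((m.factorial : ℝ) * (m + k.natAbs).factorial)) (besselI2 k) := by
  refine (Summable.of_nonneg_of_le (fun m => by positivity) (fun m => ?_)
    (Real.summable_pow_div_factorial 1)).hasSum
  rw [one_pow, div_le_div_iff_of_pos_left one_pos (by positivity) (by positivity)]
  exact le_mul_of_one_le_right (by positivity) (mod_cast (m + k.natAbs).factorial_pos)

theorem besselI2_lt_besselI2_zero {k : ℤ} (hk : k ≠ 0) : besselI2 k < besselI2 0 := by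
  refine hasSum_lt (i := 1) (fun m => ?_) ?_ (hasSum_besselI2 k) (hasSum_besselI2 0)
  · gcongr
    simp
  · simp only [Int.natAbs_zero, add_zero]
    gcongr
    omega

theorem hasSum_lineWalks_div_factorial (d : ℤ) :
    HasSum (fun m : ℕ => (lineWalks m d : ℝ) / m.factorial) (besselI2 d) := by
  have hinj : Function.Injective (fun t : ℕ => 2 * t + d.natAbs) := fun s t h => by
    simp at h; omega
  rw [← hinj.hasSum_iff]
  · convert hasSum_besselI2 d using 1
    funext t
    have hfac := Nat.add_choose_mul_factorial_mul_factorial t (t + d.natAbs)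
    rw [show t + (t + d.natAbs) = 2 * t + d.natAbs by ring] at hfac
    simp only [Function.comp, lineWalks,
      if_pos (show (2 * t + d.natAbs + d.natAbs) % 2 = 0 by omega),
      show (2 * t + d.natAbs + d.natAbs) / 2 = t + d.natAbs by omega, ← hfac]
    have hchoose := Nat.choose_pos (show t + d.natAbs ≤ 2 * t + d.natAbs by omega)
    push_cast
    field_simp
  · intro m hm
    simp only [Set.mem_range, not_exists] at hm
    simp only [lineWalks, div_eq_zero_iff, Nat.cast_eq_zero]
    left
    split_ifs with h
    · exact Nat.choose_eq_zero_of_lt (by have := hm ((m - d.natAbs) / 2); omega)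
    · rfl

theorem hasSum_halfLineWalks_div_factorial (a b : ℕ) :
    HasSum (fun m : ℕ => (halfLineWalks m a b : ℝ) / m.factorial)
      (besselI2 (a - b) - besselI2 (a + b + 2)) := by
  refine ((hasSum_lineWalks_div_factorial _).sub (hasSum_lineWalks_div_factorial _)).congr_fun
    fun m => ?_
  rw [← halfLineWalks_add_lineWalks m a b]
  push_cast
  ring

theorem tendsto_pathComm {p q : ℕ} (hp : 0 < p) (hq : 0 < q) :
    Tendsto (pathComm · p q) atTop (𝓝 (besselI2 (p - q) - besselI2 (p + q))) := by
  have hsum := hasSum_halfLineWalks_div_factorial (p - 1) (q - 1)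
  rw [show ((p - 1 : ℕ) : ℤ) - (q - 1 : ℕ) = p - q by omega,
    show ((p - 1 : ℕ) : ℤ) + (q - 1 : ℕ) + 2 = p + q by omega] at hsum
  rw [← hsum.tsum_eq, ← tendsto_add_atTop_iff_nat (p + q)]
  have hcomm : ∀ n, pathComm (n + (p + q)) p q = ∑' m, (pathAdj (n + (p + q)) ^ m)
      ⟨p - 1, by omega⟩ ⟨q - 1, by omega⟩ / m.factorial := fun n => by
    rw [pathComm, dif_pos (by omega), dif_pos (by omega), (Matrix.hasSum_exp_apply ..).tsum_eq]
  simp only [hcomm]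
  refine tendsto_tsum_of_dominated_convergence (Real.summable_pow_div_factorial 2)
    (fun m => tendsto_const_nhds.congr' ?_) (.of_forall fun n m => ?_)
  · filter_upwards [eventually_ge_atTop m] with n hn
    rw [pathAdj_pow_apply_eq_halfLineWalks _ _ (by simp; omega)]
  · obtain ⟨hnonneg, hle⟩ := pathAdj_pow_apply_nonneg_le m
      (⟨p - 1, by omega⟩ : Fin (n + (p + q))) ⟨q - 1, by omega⟩
    rw [Real.norm_of_nonneg (div_nonneg hnonneg (by positivity))]
    gcongr

theorem path_graph_cos_angle_limit_general (p q : ℕ) (hp : 0 < p) (hq : 0 < q) :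
    Tendsto (fun n => pathCos n p q) atTop
      (𝓝 ((besselI2 ((p : ℤ) - (q : ℤ)) - besselI2 ((p : ℤ) + (q : ℤ)))
        / Real.sqrt ((besselI2 0 - besselI2 (2 * (p : ℤ)))
            * (besselI2 0 - besselI2 (2 * (q : ℤ)))))) := by
  have hpp := tendsto_pathComm hp hp
  have hqq := tendsto_pathComm hq hq
  rw [sub_self, ← two_mul] at hpp hqq
  have hden : 0 < (besselI2 0 - besselI2 (2 * p)) * (besselI2 0 - besselI2 (2 * q)) :=
    mul_pos (sub_pos.2 (besselI2_lt_besselI2_zero (by omega)))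
      (sub_pos.2 (besselI2_lt_besselI2_zero (by omega)))
  exact (tendsto_pathComm hp hq).div (hpp.mul hqq).sqrt (Real.sqrt_pos.2 hden).ne'

/-- For fixed distinct vertices `p, q ≥ 1`, the cosine of the
communicability angle of the path graph `P_n` converges as `n → ∞` to
`(I_{p−q}(2) − I_{p+q}(2)) / √((I_0(2) − I_{2p}(2))(I_0(2) − I_{2q}(2)))`. -/
theorem path_graph_cos_angle_limit (p q : ℕ) (hp : 0 < p) (hq : 0 < q) (hpq : p ≠ q) :
    Tendsto (fun n => pathCos n p q) atTop
      (𝓝 ((besselI2 ((p : ℤ) - (q : ℤ)) - besselI2 ((p : ℤ) + (q : ℤ)))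
        / Real.sqrt ((besselI2 0 - besselI2 (2 * (p : ℤ)))
            * (besselI2 0 - besselI2 (2 * (q : ℤ)))))) :=
  path_graph_cos_angle_limit_general p q hp hq
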